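/- arXiv:0910.1408 — 4 statements merged into one kernel-verified Lean document; each statement's English description precedes it below -/
import Mathlib

section
/- For every even integer m ≥ 0 and every prime p, the rational number p·B_m is p-integral (i.e., the p-adic valuation of p·B_m is nonnegative), where B_m is the m-th Bernoulli number. -/
/-!
Faulhaber's formula with `n = p` summands, after dividing each term by `m + 1`, reads
`p B_m = ∑_{k<p} k^m - ∑_{i<m} (p B_i) C(m,i) p^(m-i) / (m-i+1)`.
The coefficients `p^j / (j+1)` are `p`-integral because `v_p(j+1) ≤ j`, so by strong induction on
`m` and the ultrametric inequality every `p B_m` is `p`-integral.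
-/

open Finset

lemma padicNorm_le_one_iff_padicValRat_nonneg (p : ℕ) [Fact p.Prime] (q : ℚ) :
    padicNorm p q ≤ 1 ↔ 0 ≤ padicValRat p q := by
  rcases eq_or_ne q 0 with rfl | hq
  · simp
  have hp : (1 : ℚ) < p := mod_cast (Fact.out : p.Prime).one_lt
  rw [padicNorm.eq_zpow_of_nonzero hq, ← zpow_zero (p : ℚ), zpow_le_zpow_iff_right₀ hp]
  omega

lemma padicValNat_succ_le_self (p : ℕ) (j : ℕ) : padicValNat p (j + 1) ≤ j :=
  Nat.lt_succ_iff.mp ((padicValNat_le_nat_log (j + 1)).trans_lt (Nat.log_lt_self p j.succ_ne_zero))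

lemma padicNorm_pow_div_succ_le_one (p : ℕ) [hp : Fact p.Prime] (j : ℕ) :
    padicNorm p ((p : ℚ) ^ j / ((j : ℚ) + 1)) ≤ 1 := by
  rw [padicNorm_le_one_iff_padicValRat_nonneg, ← Nat.cast_add_one,
    padicValRat.div (pow_ne_zero _ (mod_cast hp.out.ne_zero)) (mod_cast j.succ_ne_zero),
    padicValRat.pow (p : ℚ), padicValRat.self hp.out.one_lt, padicValRat.of_nat]
  have := padicValNat_succ_le_self p j
  omega

lemma bernoulli_mul_choose_mul_pow_div_eq (x : ℚ) {m i : ℕ} (hi : i ≤ m) :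
    bernoulli i * ((m + 1).choose i) * x ^ (m + 1 - i) / (m + 1) =
      x * bernoulli i * m.choose i * (x ^ (m - i) / ((m - i : ℕ) + 1)) := by
  have hsub : m + 1 - i = (m - i) + 1 := by omega
  have hchoose : (m.choose i : ℚ) * (m + 1) = ((m + 1).choose i : ℚ) * ((m - i : ℕ) + 1) := by
    exact_mod_cast hsub ▸ Nat.choose_mul_succ_eq m i
  rw [hsub]
  field_simp
  linear_combination (-bernoulli i * x * x ^ (m - i)) * hchoose

lemma natCast_mul_bernoulli_eq (n m : ℕ) :
    (n : ℚ) * bernoulli m = ∑ k ∈ range n, (k : ℚ) ^ m -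
      ∑ i ∈ range m, n * bernoulli i * m.choose i * ((n : ℚ) ^ (m - i) / ((m - i : ℕ) + 1)) := by
  have hfaulhaber := sum_range_pow n m
  rw [sum_congr rfl fun i hi => bernoulli_mul_choose_mul_pow_div_eq n
    (Nat.lt_succ_iff.mp (mem_range.mp hi)), sum_range_succ] at hfaulhaber
  simp only [Nat.choose_self, Nat.sub_self, pow_zero, Nat.cast_zero, Nat.cast_one, zero_add,
    div_one, mul_one] at hfaulhaber
  linarith

lemma padicNorm_natCast_mul_bernoulli_le_one (p : ℕ) [Fact p.Prime] (m : ℕ) :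
    padicNorm p ((p : ℚ) * bernoulli m) ≤ 1 := by
  induction m using Nat.strong_induction_on with
  | _ m ih =>
    rw [natCast_mul_bernoulli_eq]
    refine padicNorm.sub.trans (max_le ?_ ?_)
    · exact_mod_cast padicNorm.of_nat (∑ k ∈ range p, k ^ m)
    · refine padicNorm.sum_le' (fun i hi => ?_) zero_le_one
      rw [padicNorm.mul, padicNorm.mul]
      exact mul_le_one₀ (mul_le_one₀ (ih i (mem_range.mp hi)) (padicNorm.nonneg _)
        (padicNorm.of_nat _)) (padicNorm.nonneg _) (padicNorm_pow_div_succ_le_one p _)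

theorem pBernoulli_padic_integral_general (p m : ℕ) (hp : p.Prime) :
    0 ≤ padicValRat p ((p : ℚ) * bernoulli m) := by
  have : Fact p.Prime := ⟨hp⟩
  exact (padicNorm_le_one_iff_padicValRat_nonneg p _).mp
    (padicNorm_natCast_mul_bernoulli_le_one p m)

/-- For every even integer `m ≥ 0` and every prime `p`, the rational number `p * B_m`
is `p`-integral, where `B_m` is the `m`-th Bernoulli number. -/
theorem pBernoulli_padic_integral (p m : ℕ) (hp : p.Prime) (hm : Even m) :
    0 ≤ padicValRat p ((p : ℚ) * bernoulli m) :=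
  pBernoulli_padic_integral_general p m hp
end

section
/- If p is a prime and m a positive integer with (p−1) ∤ m, then the Bernoulli number B_m is p-integral. -/
/-!
For odd `m > 1` we have `B_m = 0`, and `B_1 = -1/2` is `p`-integral because `p ≠ 2`. For even `m`
the von Staudt–Clausen theorem writes `B_m` as an integer minus the sum of `1/q` over the primes `q`
with `(q - 1) ∣ m`; this sum does not contain `1/p`, and all other terms are `p`-integral.
-/

open Finset

lemma padicValRat_nonneg_of_not_dvd_den {p : ℕ} {q : ℚ} (h : ¬ p ∣ q.den) :
    0 ≤ padicValRat p q := by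
  rw [padicValRat_def, padicValNat.eq_zero_of_not_dvd h]
  simp

section

variable {p : ℕ} [Fact p.Prime]

lemma Rat.padicValuation_one_div_prime_le_one {q : ℕ} (hq : q.Prime) (hqp : q ≠ p) :
    Rat.padicValuation p (1 / q) ≤ 1 := by
  rw [Rat.padicValuation_le_one_iff, one_div, Rat.inv_natCast_den, if_neg hq.ne_zero]
  exact fun h ↦ hqp ((Nat.prime_dvd_prime_iff_eq Fact.out hq).mp h).symm

lemma padicValuation_bernoulli_two_mul_le_one {k : ℕ} (h : ¬ (p - 1) ∣ 2 * k) :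
    Rat.padicValuation p (bernoulli (2 * k)) ≤ 1 := by
  obtain ⟨n, hn⟩ := Bernoulli.vonStaudt_clausen k
  rw [eq_sub_of_add_eq hn.symm]
  refine (Rat.padicValuation p).map_sub_le (Int.padicValuation_le_one p n)
    ((Rat.padicValuation p).map_sum_le fun q hq ↦ ?_)
  obtain ⟨-, hq, hqk⟩ := mem_filter.mp hq
  exact Rat.padicValuation_one_div_prime_le_one hq (by rintro rfl; exact h hqk)

lemma padicValuation_bernoulli_le_one {m : ℕ} (h : ¬ (p - 1) ∣ m) :
    Rat.padicValuation p (bernoulli m) ≤ 1 := by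
  obtain ⟨k, rfl | rfl⟩ := m.even_or_odd'
  · exact padicValuation_bernoulli_two_mul_le_one h
  rcases Nat.eq_zero_or_pos k with rfl | hk
  · have hp2 : 2 ≠ p := by rintro rfl; exact h (one_dvd _)
    rw [bernoulli_one, neg_div, Valuation.map_neg]
    exact_mod_cast Rat.padicValuation_one_div_prime_le_one Nat.prime_two hp2
  · rw [bernoulli_eq_zero_of_odd (odd_two_mul_add_one k) (by omega), map_zero]
    exact zero_le

end

theorem bernoulli_padic_integral_general (p m : ℕ) (hp : p.Prime)
    (hdvd : ¬ (p - 1) ∣ m) :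
    0 ≤ padicValRat p (bernoulli m) := by
  have : Fact p.Prime := ⟨hp⟩
  exact padicValRat_nonneg_of_not_dvd_den
    (Rat.padicValuation_le_one_iff.mp (padicValuation_bernoulli_le_one hdvd))

/-- If `p` is a prime and `m` a positive integer with `(p-1) ∤ m`, then the
Bernoulli number `B_m` is `p`-integral. -/
theorem bernoulli_padic_integral (p m : ℕ) (hp : p.Prime) (hm : 0 < m)
    (hdvd : ¬ (p - 1) ∣ m) :
    0 ≤ padicValRat p (bernoulli m) :=
  bernoulli_padic_integral_general p m hp hdvd
end

section
/- Let p ≥ 5 be a prime and m an even positive integer. Then p·B_m ≡ Σ_{a=1}^{p−1} a^m (mod p²), as a congruence of p-integral rational numbers. -/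
/-!
Faulhaber's formula, regrouped with `C(m+1, i) (m+1-i) = (m+1) C(m, i)`, reads
`p B_m - ∑_{k<p} k^m = -∑_{i<m} (p B_i) C(m, i) p^(m-i) / (m-i+1)`.
By von Staudt–Clausen `p B_i` is `p`-integral, and for `p ≥ 5` the factor `p^(m-i) / (m-i+1)`
has valuation `≥ 2` when `i` is even, since then `m - i ≥ 2`. Of the odd indices only `i = 1`
survives, where `p B_1 = -p/2` and `p^(m-1) / m` each contribute one factor of `p`.

Since `padicValRat p 0 = 0`, the difference must also be shown nonzero: by von Staudt–Clausen
`3` divides the denominator of `B_m`, so `B_m` is not of the form `N / p` with `3 ∤ p`.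
-/

open Finset

theorem natCast_mul_bernoulli_sub_sum_range_pow (p n : ℕ) :
    (p : ℚ) * bernoulli n - ∑ k ∈ range p, (k : ℚ) ^ n =
      -∑ i ∈ range n, p * bernoulli i * (n.choose i * (p ^ (n - i) / (n - i + 1 : ℕ))) := by
  rw [sum_range_pow, sum_range_succ, Nat.choose_succ_self_right, Nat.add_sub_cancel_left]
  have hn : (n + 1 : ℚ) ≠ 0 := by positivity
  have hlast : bernoulli n * ((n + 1 : ℕ) : ℚ) * (p : ℚ) ^ 1 / (n + 1) = p * bernoulli n := by
    push_cast; field_simp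
  rw [hlast, sub_add_cancel_right, neg_inj]
  refine sum_congr rfl fun i hi => ?_
  have hin : i ≤ n := (mem_range.mp hi).le
  have hchoose : (n.choose i : ℚ) * (n + 1) = (n + 1).choose i * (n - i + 1 : ℕ) := by
    rw [show n - i + 1 = n + 1 - i by omega]; exact_mod_cast Nat.choose_mul_succ_eq n i
  rw [show n + 1 - i = n - i + 1 by omega, pow_succ]
  field_simp
  linear_combination -(bernoulli i * p ^ (n - i) * p) * hchoose

theorem padicValNat_add_le_self_of_lt {p j c : ℕ} (hp : p.Prime) (hcj : c ≤ j) (hcp : c < p) :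
    padicValNat p j + c ≤ j := by
  rcases Nat.eq_zero_or_pos (padicValNat p j) with hv | hv
  · omega
  have hj : j ≠ 0 := by rintro rfl; simp at hv
  set v := padicValNat p j
  have hpow : p ^ v ≤ j := Nat.le_of_dvd (Nat.pos_of_ne_zero hj) pow_padicValNat_dvd
  have hlt : v - 1 < p ^ (v - 1) := Nat.lt_pow_self hp.one_lt
  have hsplit : p ^ v = p * p ^ (v - 1) := by rw [← pow_succ']; congr 1; omega
  have hmul : p * v ≤ p ^ v := hsplit ▸ Nat.mul_le_mul_left p (by omega)
  nlinarith [Nat.mul_le_mul (show 1 ≤ v by omega) (show c + 1 ≤ p by omega)]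

theorem padicNorm_pow_div_succ_le {p k c : ℕ} [Fact p.Prime] (hck : c ≤ k) (hcp : c + 1 < p) :
    padicNorm p ((p : ℚ) ^ k / (k + 1 : ℕ)) ≤ (p : ℚ) ^ (-(c : ℤ)) := by
  have hp : 1 < p := (Fact.out : p.Prime).one_lt
  have hv := padicValNat_add_le_self_of_lt (j := k + 1) Fact.out (by omega) hcp
  rw [padicNorm.eq_zpow_of_nonzero (by positivity), padicValRat.div (by positivity) (by positivity),
    padicValRat.pow, padicValRat.self hp, padicValRat.of_nat]
  exact zpow_le_zpow_right₀ (by exact_mod_cast hp.le) (by omega)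

theorem padicNorm_natCast_mul_inv_of_ne {p q : ℕ} [Fact p.Prime] (hq : q.Prime) (hqp : q ≠ p) :
    padicNorm p ((p : ℚ) * (1 / q)) = (p : ℚ)⁻¹ := by
  have : Fact q.Prime := ⟨hq⟩
  rw [padicNorm.mul, padicNorm.div, padicNorm.padicNorm_p_of_prime, padicNorm.one,
    padicNorm.padicNorm_of_prime_of_ne hqp.symm, div_one, mul_one]

theorem padicNorm_natCast_mul_sum_inv_sub_ite_le {p : ℕ} [Fact p.Prime] {S : Finset ℕ}
    (hS : ∀ q ∈ S, q.Prime) :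
    padicNorm p ((p : ℚ) * ∑ q ∈ S, (1 : ℚ) / q - if p ∈ S then 1 else 0) ≤ (p : ℚ)⁻¹ := by
  have hsum : (p : ℚ) * ∑ q ∈ S, (1 : ℚ) / q - (if p ∈ S then 1 else 0)
      = ∑ q ∈ S.erase p, (p : ℚ) * (1 / q) := by
    rw [mul_sum]
    split_ifs with hpS
    · rw [← add_sum_erase S _ hpS,
        mul_one_div_cancel (by exact_mod_cast (Fact.out : p.Prime).ne_zero), add_sub_cancel_left]
    · rw [erase_eq_of_notMem hpS, sub_zero]
  rw [hsum]
  refine padicNorm.sum_le' (fun q hq => ?_) (by positivity)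
  exact (padicNorm_natCast_mul_inv_of_ne (hS q (mem_of_mem_erase hq)) (ne_of_mem_erase hq)).le

def vonStaudtPrimes (k : ℕ) : Finset ℕ :=
  {q ∈ range (2 * k + 2) | q.Prime ∧ (q - 1) ∣ 2 * k}

theorem padicNorm_natCast_mul_bernoulli_add_ite_le (p k : ℕ) [Fact p.Prime] :
    padicNorm p ((p : ℚ) * bernoulli (2 * k) + if p ∈ vonStaudtPrimes k then 1 else 0)
      ≤ (p : ℚ)⁻¹ := by
  obtain ⟨z, hz⟩ := Bernoulli.vonStaudt_clausen k
  have hB : bernoulli (2 * k) = z - ∑ q ∈ vonStaudtPrimes k, (1 : ℚ) / q := by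
    rw [hz, vonStaudtPrimes]; ring
  have hS : ∀ q ∈ vonStaudtPrimes k, q.Prime := fun q hq => (mem_filter.mp hq).2.1
  rw [hB, show ∀ x y : ℚ, (p : ℚ) * (z - x) + y = p * z - (p * x - y) by intros; ring]
  refine padicNorm.sub.trans (max_le ?_ (padicNorm_natCast_mul_sum_inv_sub_ite_le hS))
  rw [padicNorm.mul, padicNorm.padicNorm_p_of_prime]
  exact mul_le_of_le_one_right (by positivity) (padicNorm.of_int z)

theorem padicNorm_natCast_mul_bernoulli_two_mul_le_one (p k : ℕ) [Fact p.Prime] :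
    padicNorm p ((p : ℚ) * bernoulli (2 * k)) ≤ 1 := by
  have hind : padicNorm p (if p ∈ vonStaudtPrimes k then 1 else 0) ≤ 1 := by
    split_ifs <;> simp
  rw [← add_sub_cancel_right ((p : ℚ) * bernoulli (2 * k)) (if p ∈ vonStaudtPrimes k then 1 else 0)]
  refine padicNorm.sub.trans (max_le ?_ hind)
  exact (padicNorm_natCast_mul_bernoulli_add_ite_le p k).trans
    (inv_le_one_of_one_le₀ (by exact_mod_cast (Fact.out : p.Prime).one_le))

theorem padicNorm_three_mul_bernoulli_two_mul {k : ℕ} (hk : k ≠ 0) :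
    padicNorm 3 (3 * bernoulli (2 * k)) = 1 := by
  have : Fact (Nat.Prime 3) := ⟨Nat.prime_three⟩
  have h3 : 3 ∈ vonStaudtPrimes k :=
    mem_filter.mpr ⟨mem_range.mpr (by omega), Nat.prime_three, dvd_mul_right 2 k⟩
  have hle := padicNorm_natCast_mul_bernoulli_add_ite_le 3 k
  rw [if_pos h3, Nat.cast_ofNat] at hle
  have hne : padicNorm 3 (3 * bernoulli (2 * k) + 1) ≠ padicNorm 3 (-1) := by
    rw [padicNorm.neg, padicNorm.one]
    exact (hle.trans_lt (by norm_num)).ne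
  rw [← add_neg_cancel_right (3 * bernoulli (2 * k)) 1, padicNorm.add_eq_max_of_ne hne,
    padicNorm.neg, padicNorm.one, max_eq_right (hle.trans (by norm_num))]

theorem natCast_mul_bernoulli_ne_natCast {p N m : ℕ} (hp3 : ¬ 3 ∣ p) (hm : 0 < m)
    (hme : Even m) : (p : ℚ) * bernoulli m ≠ N := by
  have : Fact (Nat.Prime 3) := ⟨Nat.prime_three⟩
  obtain ⟨k, rfl⟩ := hme
  rw [← two_mul]
  intro h
  have hnorm := congrArg (padicNorm 3) (congrArg (3 * ·) h)
  rw [mul_left_comm, padicNorm.mul, padicNorm_three_mul_bernoulli_two_mul (by omega), mul_one,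
    (padicNorm.nat_eq_one_iff p).mpr hp3, padicNorm.mul] at hnorm
  have h3 : padicNorm 3 (3 : ℚ) = 3⁻¹ := by exact_mod_cast padicNorm.padicNorm_p_of_prime (p := 3)
  rw [h3] at hnorm
  linarith [padicNorm.of_nat (p := 3) N]

theorem padicNorm_mul_natCast_mul_le (p : ℕ) [Fact p.Prime] (N : ℕ) (x y : ℚ) :
    padicNorm p (x * (N * y)) ≤ padicNorm p x * padicNorm p y := by
  rw [padicNorm.mul, padicNorm.mul, mul_left_comm]
  exact mul_le_of_le_one_left (mul_nonneg (padicNorm.nonneg x) (padicNorm.nonneg y))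
    (padicNorm.of_nat N)

theorem padicNorm_natCast_mul_bernoulli_one {p : ℕ} [Fact p.Prime] (hp2 : p ≠ 2) :
    padicNorm p ((p : ℚ) * bernoulli 1) = (p : ℚ)⁻¹ := by
  have : Fact (Nat.Prime 2) := ⟨Nat.prime_two⟩
  rw [bernoulli_one, padicNorm.mul, padicNorm.padicNorm_p_of_prime, neg_div, padicNorm.neg,
    padicNorm.div, padicNorm.one, show (2 : ℚ) = (2 : ℕ) by norm_num,
    padicNorm.padicNorm_of_prime_of_ne hp2, div_one, mul_one]

theorem padicNorm_natCast_mul_bernoulli_sub_sum_range_pow_le {p m : ℕ} [Fact p.Prime]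
    (hp5 : 5 ≤ p) (hme : Even m) :
    padicNorm p ((p : ℚ) * bernoulli m - ∑ k ∈ range p, (k : ℚ) ^ m) ≤ (p : ℚ) ^ (-2 : ℤ) := by
  rw [natCast_mul_bernoulli_sub_sum_range_pow, padicNorm.neg]
  refine padicNorm.sum_le' (fun i hi => ?_) (by positivity)
  have him : i < m := mem_range.mp hi
  refine (padicNorm_mul_natCast_mul_le _ _ _ _).trans ?_
  rcases Nat.even_or_odd i with hie | hio
  · obtain ⟨j, rfl⟩ := hie.two_dvd
    have hmj : 2 ≤ m - 2 * j := by obtain ⟨r, hr⟩ := hme; omega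
    calc _ ≤ 1 * (p : ℚ) ^ (-2 : ℤ) :=
          mul_le_mul (padicNorm_natCast_mul_bernoulli_two_mul_le_one p j)
            (padicNorm_pow_div_succ_le (c := 2) hmj (by omega)) (padicNorm.nonneg _) zero_le_one
      _ = _ := one_mul _
  obtain rfl | hi1 : i = 1 ∨ 1 < i := by obtain ⟨s, rfl⟩ := hio; omega
  · calc _ ≤ (p : ℚ)⁻¹ * (p : ℚ) ^ (-1 : ℤ) :=
          mul_le_mul (padicNorm_natCast_mul_bernoulli_one (by omega)).le
            (padicNorm_pow_div_succ_le (c := 1) (by omega) (by omega)) (padicNorm.nonneg _)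
            (by positivity)
      _ = _ := by rw [← zpow_neg_one, ← zpow_add₀ (by positivity)]; norm_num
  · rw [bernoulli_eq_zero_of_odd hio hi1, mul_zero, padicNorm.zero, zero_mul]
    positivity

theorem le_padicValRat_of_padicNorm_le {p : ℕ} [Fact p.Prime] {x : ℚ} {n : ℤ} (hx : x ≠ 0)
    (h : padicNorm p x ≤ (p : ℚ) ^ (-n)) : n ≤ padicValRat p x := by
  rw [padicNorm.eq_zpow_of_nonzero hx,
    zpow_le_zpow_iff_right₀ (by exact_mod_cast (Fact.out : p.Prime).one_lt)] at h
  omega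

theorem sum_Icc_one_pow_eq_sum_range_pow {R : Type*} [Semiring R] (p : ℕ) {n : ℕ} (hn : n ≠ 0) :
    ∑ a ∈ Icc 1 (p - 1), (a : R) ^ n = ∑ k ∈ range p, (k : R) ^ n := by
  rcases p.eq_zero_or_pos with rfl | hp
  · simp
  have hIcc : Icc 1 (p - 1) = Ico 1 p := by ext; simp only [mem_Icc, mem_Ico]; omega
  rw [hIcc, range_eq_Ico, sum_eq_sum_Ico_succ_bot hp, Nat.cast_zero, zero_pow hn, zero_add]

/-- For a prime `p ≥ 5` and an even positive integer `m`,
`p * B_m ≡ ∑_{a=1}^{p-1} a ^ m (mod p²)` as `p`-integral rational numbers. -/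
theorem pBernoulli_congr_sum_pow (p m : ℕ) (hp : p.Prime) (hp5 : 5 ≤ p)
    (hm : 0 < m) (hme : Even m) :
    2 ≤ padicValRat p ((p : ℚ) * bernoulli m - ∑ a ∈ Finset.Icc 1 (p - 1), (a : ℚ) ^ m) := by
  have : Fact p.Prime := ⟨hp⟩
  have hp3 : ¬ 3 ∣ p := fun h => by
    have := (Nat.prime_dvd_prime_iff_eq Nat.prime_three hp).mp h; omega
  rw [sum_Icc_one_pow_eq_sum_range_pow p hm.ne']
  refine le_padicValRat_of_padicNorm_le (sub_ne_zero.mpr ?_)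
    (padicNorm_natCast_mul_bernoulli_sub_sum_range_pow_le hp5 hme)
  exact_mod_cast natCast_mul_bernoulli_ne_natCast (N := ∑ k ∈ range p, k ^ m) hp3 hm hme
end

section
/- Let χ be a Dirichlet character of conductor f and let g be any positive multiple of f. Then for every n ≥ 0, the generalized Bernoulli number satisfies B_{n,χ} = g^{n−1} · Σ_{a=1}^{g} χ(a)·B_n(a/g), where B_n(X) is the n-th Bernoulli polynomial. -/
/-!
The key input is Raabe's multiplication formula
`∑_{j<m} B_n((x + j)/m) = m^(1-n) B_n(x)`, obtained from the exponential generating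
function of `B_n(x)`: summing `t e^{(x+j)t/m}/(e^t - 1)` over `j < m` gives a geometric sum
that cancels against `e^t - 1 = (e^{t/m} - 1) ∑_{j<m} e^{jt/m}`.
For `g = f m`, write `a = f j + b` with `b < f`, `j < m`: then `χ(a) = χ(b)` by periodicity,
and the inner sum over `j` is a Raabe sum, which turns `g^(n-1)` into `f^(n-1)`.
-/

/-- The `n`-th generalized Bernoulli number of a Dirichlet character `χ` modulo `f`,
defined by `B_{n,χ} = f^(n-1) · ∑_{a=1}^{f} χ(a) · B_n(a/f)`, which is the closed
formula arising from the generating function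
`∑_{a=1}^{f} χ(a) t e^{at}/(e^{ft}-1) = ∑_{n≥0} B_{n,χ} t^n/n!`. -/
noncomputable def genBernoulli {f : ℕ} (χ : DirichletCharacter ℂ f) (n : ℕ) : ℂ :=
  (f : ℂ) ^ ((n : ℤ) - 1) *
    ∑ a ∈ Finset.range f, χ (a + 1 : ℕ) *
      Polynomial.aeval (((a : ℂ) + 1) / (f : ℂ)) (Polynomial.bernoulli n)

open Finset

theorem Finset.sum_range_mul_eq_sum_sum {M : Type*} [AddCommMonoid M] (F : ℕ → M) (f m : ℕ) :
    ∑ a ∈ range (f * m), F a = ∑ j ∈ range m, ∑ b ∈ range f, F (f * j + b) := by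
  induction m with
  | zero => simp
  | succ m ih => rw [mul_add_one, sum_range_add, ih, sum_range_succ]

namespace PowerSeries

theorem rescale_exp_pow {A : Type*} [CommRing A] [Algebra ℚ A] (a : A) (k : ℕ) :
    rescale a (exp A) ^ k = rescale (k * a) (exp A) := by
  rw [← map_pow, exp_pow_eq_rescale_exp, rescale_rescale]

theorem exp_sub_one_ne_zero (A : Type*) [CommRing A] [Algebra ℚ A] [Nontrivial A] :
    exp A - 1 ≠ 0 :=
  ne_of_apply_ne (coeff 1) (by simp [coeff_exp])

end PowerSeries

namespace Polynomial

open PowerSeries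

variable {K : Type*} [Field K] [CharZero K]

noncomputable def bernoulliEGF (x : K) : K⟦X⟧ :=
  PowerSeries.mk fun n => aeval x (bernoulli n) / n.factorial

theorem coeff_bernoulliEGF (x : K) (n : ℕ) :
    PowerSeries.coeff n (bernoulliEGF x) = aeval x (bernoulli n) / n.factorial :=
  coeff_mk _ _

theorem bernoulliEGF_mul_exp_sub_one (x : K) :
    bernoulliEGF x * (exp K - 1) = PowerSeries.X * rescale x (exp K) := by
  rw [← bernoulli_generating_function x]
  congr 1
  ext n
  simp [bernoulliEGF, Algebra.smul_def, div_eq_inv_mul]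

theorem sum_range_aeval_bernoulli_add_div {m : ℕ} (hm : m ≠ 0) (x : K) (n : ℕ) :
    ∑ j ∈ range m, aeval ((x + j) / m) (bernoulli n) =
      (m : K) ^ (1 - n : ℤ) * aeval x (bernoulli n) := by
  have hm' : (m : K) ≠ 0 := Nat.cast_ne_zero.mpr hm
  set e := rescale (m : K)⁻¹ (exp K)
  have hgeom : exp K - 1 = (∑ j ∈ range m, e ^ j) * (e - 1) := by
    rw [geom_sum_mul, rescale_exp_pow, mul_inv_cancel₀ hm', rescale_one, RingHom.id_apply]
  have key : ∑ j ∈ range m, bernoulliEGF ((x + j) / m) =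
      PowerSeries.C (m : K) * rescale (m : K)⁻¹ (bernoulliEGF x) := by
    refine mul_right_cancel₀ (exp_sub_one_ne_zero K) ?_
    calc (∑ j ∈ range m, bernoulliEGF ((x + j) / m)) * (exp K - 1)
        = PowerSeries.X * rescale (x / m) (exp K) * ∑ j ∈ range m, e ^ j := by
          rw [sum_mul, mul_sum]
          refine sum_congr rfl fun j _ => ?_
          rw [bernoulliEGF_mul_exp_sub_one, rescale_exp_pow, mul_assoc,
            exp_mul_exp_eq_exp_add]
          congr 2
          field_simp
      _ = PowerSeries.C (m : K) * rescale (m : K)⁻¹ (bernoulliEGF x * (exp K - 1)) *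
            ∑ j ∈ range m, e ^ j := by
          rw [bernoulliEGF_mul_exp_sub_one, map_mul, rescale_X, rescale_rescale, ← mul_assoc,
            ← mul_assoc, ← map_mul, mul_inv_cancel₀ hm', map_one, one_mul, div_eq_mul_inv]
      _ = PowerSeries.C (m : K) * rescale (m : K)⁻¹ (bernoulliEGF x) * (exp K - 1) := by
          rw [map_mul, map_sub, map_one, hgeom]
          ring
  have hcoeff := congrArg (PowerSeries.coeff n) key
  simp only [map_sum, coeff_bernoulliEGF, PowerSeries.coeff_C_mul, coeff_rescale, ← sum_div,
    ← mul_div_assoc] at hcoeff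
  rw [div_left_inj' (Nat.cast_ne_zero.mpr n.factorial_ne_zero)] at hcoeff
  rw [hcoeff, zpow_sub₀ hm', zpow_one, zpow_natCast, inv_pow, div_eq_mul_inv, mul_assoc]

end Polynomial

section

open Polynomial

variable {K : Type*} [Field K] [CharZero K]

noncomputable def periodicGenBernoulli (c : ℕ → K) (g n : ℕ) : K :=
  (g : K) ^ ((n : ℤ) - 1) *
    ∑ a ∈ range g, c (a + 1) * aeval (((a : K) + 1) / g) (bernoulli n)

theorem periodicGenBernoulli_mul_right {c : ℕ → K} {f : ℕ} (hc : Function.Periodic c f)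
    (hf : f ≠ 0) {m : ℕ} (hm : m ≠ 0) (n : ℕ) :
    periodicGenBernoulli c (f * m) n = periodicGenBernoulli c f n := by
  have hf' : (f : K) ≠ 0 := Nat.cast_ne_zero.mpr hf
  have hm' : (m : K) ≠ 0 := Nat.cast_ne_zero.mpr hm
  have hpow : (m : K) ^ ((n : ℤ) - 1) * (m : K) ^ (1 - n : ℤ) = 1 := by
    rw [← zpow_add₀ hm', sub_add_sub_cancel', sub_self, zpow_zero]
  unfold periodicGenBernoulli
  calc ((f * m : ℕ) : K) ^ ((n : ℤ) - 1) *
        ∑ a ∈ range (f * m), c (a + 1) * aeval (((a : K) + 1) / (f * m : ℕ)) (bernoulli n)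
      = ((f * m : ℕ) : K) ^ ((n : ℤ) - 1) * ∑ b ∈ range f, c (b + 1) *
          ∑ j ∈ range m, aeval (((b + 1) / f + j) / m : K) (bernoulli n) := by
        rw [sum_range_mul_eq_sum_sum, sum_comm]
        congr 1
        refine sum_congr rfl fun b _ => ?_
        rw [mul_sum]
        refine sum_congr rfl fun j _ => ?_
        rw [show f * j + b + 1 = b + 1 + j * f by ring,
          show c (b + 1 + j * f) = c (b + 1) from hc.nat_mul j (b + 1)]
        congr 3
        push_cast
        field_simp
        ring
    _ = ((f * m : ℕ) : K) ^ ((n : ℤ) - 1) * ∑ b ∈ range f, c (b + 1) *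
          ((m : K) ^ (1 - n : ℤ) * aeval (((b : K) + 1) / f) (bernoulli n)) := by
        simp_rw [sum_range_aeval_bernoulli_add_div hm]
    _ = (f : K) ^ ((n : ℤ) - 1) *
          ∑ b ∈ range f, c (b + 1) * aeval (((b : K) + 1) / f) (bernoulli n) := by
        rw [mul_sum, mul_sum]
        refine sum_congr rfl fun b _ => ?_
        rw [Nat.cast_mul, mul_zpow]
        linear_combination ((f : K) ^ ((n : ℤ) - 1) * c (b + 1) *
          aeval (((b : K) + 1) / f) (bernoulli n)) * hpow

end

theorem genBernoulli_eq_of_dvd_general {f : ℕ} (χ : DirichletCharacter ℂ f)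
    (g : ℕ) (hg : 0 < g) (hfg : f ∣ g) (n : ℕ) :
    genBernoulli χ n =
      (g : ℂ) ^ ((n : ℤ) - 1) *
        ∑ a ∈ Finset.range g, χ (a + 1 : ℕ) *
          Polynomial.aeval (((a : ℂ) + 1) / (g : ℂ)) (Polynomial.bernoulli n) := by
  obtain ⟨m, rfl⟩ := hfg
  have hperiodic : Function.Periodic (fun a : ℕ => χ a) f := fun a => by simp
  show periodicGenBernoulli (fun a : ℕ => χ a) f n =
    periodicGenBernoulli (fun a : ℕ => χ a) (f * m) n
  exact (periodicGenBernoulli_mul_right hperiodic (left_ne_zero_of_mul hg.ne')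
    (right_ne_zero_of_mul hg.ne') n).symm

/-- If `χ` is a Dirichlet character of conductor `f` and `g` is any positive multiple
of `f`, then `B_{n,χ} = g^(n-1) · ∑_{a=1}^{g} χ(a) · B_n(a/g)` for all `n ≥ 0`. -/
theorem genBernoulli_eq_of_dvd {f : ℕ} (hf : 0 < f) (χ : DirichletCharacter ℂ f)
    (hχ : χ.conductor = f) (g : ℕ) (hg : 0 < g) (hfg : f ∣ g) (n : ℕ) :
    genBernoulli χ n =
      (g : ℂ) ^ ((n : ℤ) - 1) *
        ∑ a ∈ Finset.range g, χ (a + 1 : ℕ) *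
          Polynomial.aeval (((a : ℂ) + 1) / (g : ℂ)) (Polynomial.bernoulli n) :=
  genBernoulli_eq_of_dvd_general χ g hg hfg n
end
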